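/- arXiv:1911.08200 — 3 statements merged into one kernel-verified Lean document; each statement's English description precedes it below -/
import Mathlib

section
/- The variance of the performance estimator û_{S_N} equals (1/N)·σ²_WI + (Σ_{i=1}^K n_i² / N²)·σ²_AI, i.e., E[(û_{S_N} − u)²] = (1/N)·σ²_WI + (Σ_{i=1}^K n_i² / N²)·σ²_AI. -/
open MeasureTheory

/-- The sampling measure: `K` training instances drawn i.i.d. from `D` and
`N` random seeds drawn i.i.d. from `G`, independently of the instances. -/
noncomputable def sampleMeasure {Z V : Type*} [MeasurableSpace Z] [MeasurableSpace V]
    (D : Measure Z) (G : Measure V) (K N : ℕ) :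
    Measure ((Fin K → Z) × (Fin N → V)) :=
  (Measure.pi fun _ : Fin K => D).prod (Measure.pi fun _ : Fin N => G)

/-- True performance `u = E_{z∼D, v∼G}[f(z,v)]`. -/
noncomputable def truePerf {Z V : Type*} [MeasurableSpace Z] [MeasurableSpace V]
    (D : Measure Z) (G : Measure V) (f : Z × V → ℝ) : ℝ :=
  ∫ zv, f zv ∂(D.prod G)

/-- Within-instance mean `u_z = E_{v∼G}[f(z,v)]`. -/
noncomputable def instPerf {Z V : Type*} [MeasurableSpace V]
    (G : Measure V) (f : Z × V → ℝ) (z : Z) : ℝ :=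
  ∫ v, f (z, v) ∂G

/-- Expected within-instance variance `σ²_WI = E_{z∼D}[E_{v∼G}[(f(z,v) − u_z)²]]`. -/
noncomputable def sigma2WI {Z V : Type*} [MeasurableSpace Z] [MeasurableSpace V]
    (D : Measure Z) (G : Measure V) (f : Z × V → ℝ) : ℝ :=
  ∫ z, (∫ v, (f (z, v) - instPerf G f z) ^ 2 ∂G) ∂D

/-- Across-instance variance `σ²_AI = E_{z∼D}[(u_z − u)²]`. -/
noncomputable def sigma2AI {Z V : Type*} [MeasurableSpace Z] [MeasurableSpace V]
    (D : Measure Z) (G : Measure V) (f : Z × V → ℝ) : ℝ :=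
  ∫ z, (instPerf G f z - truePerf D G f) ^ 2 ∂D

/-- The number `n_i` of runs performed on the `i`-th training instance, for an
assignment `a : Fin N → Fin K` of each of the `N` runs to a training instance. -/
def nCount {K N : ℕ} (a : Fin N → Fin K) (i : Fin K) : ℕ :=
  (Finset.univ.filter fun t => a t = i).card

lemma pi_map_eval {ι : Type*} [Fintype ι] {X : Type*} [MeasurableSpace X]
    (μ : Measure X) [IsProbabilityMeasure μ] (i : ι) :
    (Measure.pi fun _ : ι => μ).map (Function.eval i) = μ := by
  classical
  ext s hs
  rw [Measure.map_apply (measurable_pi_apply i) hs]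
  have : Function.eval i ⁻¹' s = Set.pi Set.univ (Function.update (fun _ : ι => (Set.univ : Set X)) i s) := by
    ext x
    simp only [Set.mem_preimage, Set.mem_pi, Set.mem_univ, true_implies, Function.eval]
    constructor
    · intro h j
      rcases eq_or_ne j i with rfl | hj
      · simpa using h
      · simp [Function.update_of_ne hj]
    · intro h; simpa using h i
  rw [this, Measure.pi_pi]
  calc ∏ j : ι, μ (Function.update (fun _ : ι => (Set.univ : Set X)) i s j)
      = ∏ j : ι, if j = i then μ s else 1 := by
        refine Finset.prod_congr rfl fun j _ => ?_
        rcases eq_or_ne j i with rfl | hj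
        · simp
        · simp [Function.update_of_ne hj, hj]
    _ = μ s := by simp

lemma pi_map_pair {ι : Type*} [Fintype ι] {X : Type*} [MeasurableSpace X]
    (μ : Measure X) [IsProbabilityMeasure μ] {i j : ι} (hij : i ≠ j) :
    (Measure.pi fun _ : ι => μ).map (fun x => (x i, x j)) = μ.prod μ := by
  classical
  refine (Measure.prod_eq ?_).symm
  intro s t hs ht
  rw [Measure.map_apply ((measurable_pi_apply i).prodMk (measurable_pi_apply j)) (hs.prod ht)]
  have : (fun x : ι → X => (x i, x j)) ⁻¹' (s ×ˢ t)
      = Set.pi Set.univ (Function.update (Function.update (fun _ : ι => (Set.univ : Set X)) i s) j t) := by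
    ext x
    simp only [Set.mem_preimage, Set.mem_prod, Set.mem_pi, Set.mem_univ, true_implies]
    constructor
    · intro h k
      rcases eq_or_ne k j with rfl | hk
      · simpa using h.2
      · rw [Function.update_of_ne hk]
        rcases eq_or_ne k i with rfl | hk'
        · simpa using h.1
        · simp [Function.update_of_ne hk']
    · intro h
      constructor
      · have := h i; rwa [Function.update_of_ne hij, Function.update_self] at this
      · have := h j; rwa [Function.update_self] at this
  rw [this, Measure.pi_pi]
  calc ∏ k : ι, μ (Function.update (Function.update (fun _ : ι => (Set.univ : Set X)) i s) j t k)
      = ∏ k : ι, (if k = i then μ s else 1) * (if k = j then μ t else 1) := by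
        refine Finset.prod_congr rfl fun k _ => ?_
        rcases eq_or_ne k j with rfl | hk
        · simp [Function.update_self, hij.symm]
        · rw [Function.update_of_ne hk]
          rcases eq_or_ne k i with rfl | hk'
          · simp [hk]
          · simp [Function.update_of_ne hk', hk, hk']
    _ = μ s * μ t := by
        rw [Finset.prod_mul_distrib]
        simp

lemma integrable_of_bdd {W : Type*} [MeasurableSpace W] {μ : Measure W} [IsFiniteMeasure μ]
    {F : W → ℝ} (hF : Measurable F) {C : ℝ} (hC : ∀ w, ‖F w‖ ≤ C) : Integrable F μ :=
  ⟨hF.aestronglyMeasurable, HasFiniteIntegral.of_bounded (ae_of_all _ hC)⟩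

/-- **Variance of the performance estimator.**
`E[(û_{S_N} − u)²] = (1/N)·σ²_WI + (Σ_{i=1}^K n_i² / N²)·σ²_AI`. -/
theorem estimator_variance
    {Z V : Type*} [MeasurableSpace Z] [MeasurableSpace V]
    (D : Measure Z) (G : Measure V)
    [IsProbabilityMeasure D] [IsProbabilityMeasure G]
    (L U : ℝ) (hLU : L ≤ U)
    (f : Z × V → ℝ) (hf : Measurable f)
    (hbdd : ∀ z v, f (z, v) ∈ Set.Icc L U)
    (K N : ℕ) (hN : 1 ≤ N)
    (a : Fin N → Fin K) :
    ∫ ω : (Fin K → Z) × (Fin N → V),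
        ((1 / (N : ℝ)) * ∑ t : Fin N, f (ω.1 (a t), ω.2 t) - truePerf D G f) ^ 2
      ∂(sampleMeasure D G K N)
      = (1 / (N : ℝ)) * sigma2WI D G f
        + ((∑ i : Fin K, (nCount a i : ℝ) ^ 2) / (N : ℝ) ^ 2) * sigma2AI D G f := by
  classical
  have hN0 : (N : ℝ) ≠ 0 := by positivity
  set u : ℝ := truePerf D G f with hu
  set M : ℝ := max |L| |U| with hM
  have hfb : ∀ p : Z × V, ‖f p‖ ≤ M := by
    rintro ⟨z, v⟩
    obtain ⟨h1, h2⟩ := hbdd z v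
    rw [Real.norm_eq_abs, abs_le]
    constructor
    · calc -M ≤ -|L| := by simp [hM]
        _ ≤ L := neg_abs_le L
        _ ≤ f (z, v) := h1
    · exact h2.trans ((le_abs_self U).trans (le_max_right _ _))
  -- f is integrable on D.prod G
  have hfint : Integrable f (D.prod G) := integrable_of_bdd hf hfb
  have hub : ‖u‖ ≤ M := by
    rw [hu, truePerf]
    calc ‖∫ p, f p ∂(D.prod G)‖ ≤ M * ((D.prod G) Set.univ).toReal :=
          norm_integral_le_of_norm_le_const (ae_of_all _ hfb)
      _ = M := by simp
  set g : Z × V → ℝ := fun p => f p - u with hg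
  have hgm : Measurable g := hf.sub measurable_const
  have hgb : ∀ p, ‖g p‖ ≤ 2 * M := by
    intro p
    calc ‖f p - u‖ ≤ ‖f p‖ + ‖u‖ := norm_sub_le _ _
      _ ≤ M + M := add_le_add (hfb p) hub
      _ = 2 * M := by ring
  -- instPerf measurability and bounds
  have hinstm : Measurable (instPerf G f) :=
    (hf.stronglyMeasurable.integral_prod_right').measurable
  have hinstb : ∀ z, ‖instPerf G f z‖ ≤ M := by
    intro z
    calc ‖∫ v, f (z, v) ∂G‖ ≤ M * (G Set.univ).toReal :=
          norm_integral_le_of_norm_le_const (ae_of_all _ fun v => hfb (z, v))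
      _ = M := by simp
  set h : Z → ℝ := fun z => instPerf G f z - u with hh
  have hhm : Measurable h := hinstm.sub measurable_const
  have hhb : ∀ z, ‖h z‖ ≤ 2 * M := by
    intro z
    calc ‖instPerf G f z - u‖ ≤ ‖instPerf G f z‖ + ‖u‖ := norm_sub_le _ _
      _ ≤ M + M := add_le_add (hinstb z) hub
      _ = 2 * M := by ring
  -- for each z, f (z, ·) is integrable
  have hfz : ∀ z, Integrable (fun v => f (z, v)) G := fun z =>
    integrable_of_bdd (hf.comp measurable_prodMk_left) fun v => hfb (z, v)
  -- F1 : ∫ v, g (z, v) = h z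
  have hF1 : ∀ z, ∫ v, g (z, v) ∂G = h z := by
    intro z
    rw [hg, hh]
    simp only
    rw [integral_sub (hfz z) (integrable_const u), integral_const]
    simp [instPerf]
  -- F2 : ∫ z, instPerf z ∂D = u
  have hF2 : ∫ z, instPerf G f z ∂D = u := by
    rw [hu, truePerf, integral_prod f hfint]
    rfl
  -- F3
  have hF3 : ∫ z, h z ∂D = 0 := by
    rw [hh]
    simp only
    rw [integral_sub (integrable_of_bdd hinstm hinstb) (integrable_const u), integral_const, hF2]
    simp
  -- ∫ h² = σAI
  have hF5 : ∫ z, h z * h z ∂D = sigma2AI D G f := by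
    rw [sigma2AI]
    exact integral_congr_ae (ae_of_all _ fun z => by rw [hh]; ring)
  -- F4 : ∫ g² over D.prod G = σWI + σAI
  have hF4 : ∫ p, g p * g p ∂(D.prod G) = sigma2WI D G f + sigma2AI D G f := by
    have hint : Integrable (fun p => g p * g p) (D.prod G) :=
      integrable_of_bdd (hgm.mul hgm) (C := (2*M)*(2*M)) fun p => by
        rw [norm_mul]; exact mul_le_mul (hgb p) (hgb p) (norm_nonneg _) (by positivity)
    rw [integral_prod _ hint]
    have step : ∀ z, ∫ v, g (z, v) * g (z, v) ∂G
        = (∫ v, (f (z, v) - instPerf G f z) ^ 2 ∂G) + h z * h z := by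
      intro z
      have e1 : ∀ v, g (z, v) * g (z, v)
          = (f (z, v) - instPerf G f z) ^ 2
            + (2 * h z) * (f (z, v) - instPerf G f z) + h z * h z := by
        intro v
        rw [hg, hh]
        ring
      rw [integral_congr_ae (ae_of_all _ e1)]
      have i1 : Integrable (fun v => (f (z, v) - instPerf G f z) ^ 2) G := by
        refine integrable_of_bdd ((hf.comp measurable_prodMk_left).sub measurable_const |>.pow_const 2)
          (C := (2*M)^2) fun v => ?_
        rw [Real.norm_eq_abs, abs_pow, ← Real.norm_eq_abs]
        exact pow_le_pow_left₀ (norm_nonneg _)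
          ((norm_sub_le _ _).trans (by linarith [hfb (z,v), hinstb z])) 2
      have i2 : Integrable (fun v => (2 * h z) * (f (z, v) - instPerf G f z)) G := by
        have := (((hfz z).sub (integrable_const (instPerf G f z))).const_mul (2 * h z))
        simpa using this
      have i12 : Integrable (fun v => (f (z, v) - instPerf G f z) ^ 2
          + (2 * h z) * (f (z, v) - instPerf G f z)) G := i1.add i2
      rw [integral_add i12 (integrable_const _), integral_add i1 i2, integral_const]
      have e2 : ∫ v, (2 * h z) * (f (z, v) - instPerf G f z) ∂G = 0 := by
        rw [integral_const_mul, integral_sub (hfz z) (integrable_const _), integral_const]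
        simp [instPerf]
      rw [e2]
      simp
    rw [integral_congr_ae (ae_of_all _ step)]
    have j1 : Integrable (fun z => ∫ v, (f (z, v) - instPerf G f z) ^ 2 ∂G) D := by
      refine integrable_of_bdd ?_ (C := (2*M)^2) ?_
      · exact ((hf.sub (hinstm.comp measurable_fst)).pow_const 2).stronglyMeasurable.integral_prod_right'.measurable
      · intro z
        calc ‖∫ v, (f (z, v) - instPerf G f z) ^ 2 ∂G‖ ≤ (2*M)^2 * (G Set.univ).toReal := by
              refine norm_integral_le_of_norm_le_const (ae_of_all _ fun v => ?_)
              rw [Real.norm_eq_abs, abs_pow, ← Real.norm_eq_abs]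
              exact pow_le_pow_left₀ (norm_nonneg _)
                ((norm_sub_le _ _).trans (by linarith [hfb (z,v), hinstb z])) 2
          _ = (2*M)^2 := by simp
    have j2 : Integrable (fun z => h z * h z) D :=
      integrable_of_bdd (hhm.mul hhm) (C := (2*M)*(2*M)) fun z => by
        rw [norm_mul]; exact mul_le_mul (hhb z) (hhb z) (norm_nonneg _) (by positivity)
    rw [integral_add j1 j2, hF5]
    rfl
  -- the sampling measure
  set μ := sampleMeasure D G K N with hμdef
  haveI : IsProbabilityMeasure μ := by
    rw [hμdef, sampleMeasure]; infer_instance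
  -- the centered coordinate functions
  set gc : Fin N → ((Fin K → Z) × (Fin N → V)) → ℝ :=
    fun t ω => g (ω.1 (a t), ω.2 t) with hgc
  have hgcm : ∀ t, Measurable (gc t) := fun t =>
    hgm.comp (((measurable_pi_apply _).comp measurable_fst).prodMk
      ((measurable_pi_apply _).comp measurable_snd))
  have hgcb : ∀ t ω, ‖gc t ω‖ ≤ 2 * M := fun t ω => hgb _
  -- case 1 : diagonal
  have case1 : ∀ s : Fin N, ∫ ω, gc s ω * gc s ω ∂μ = sigma2WI D G f + sigma2AI D G f := by
    intro s
    set m : ((Fin K → Z) × (Fin N → V)) → Z × V := fun ω => (ω.1 (a s), ω.2 s) with hmdef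
    have hm : Measurable m :=
      (((measurable_pi_apply _).comp measurable_fst).prodMk
        ((measurable_pi_apply _).comp measurable_snd))
    have hmap : μ.map m = D.prod G := by
      have : m = Prod.map (Function.eval (a s)) (Function.eval s) := rfl
      rw [this, hμdef, sampleMeasure,
        ← Measure.map_prod_map _ _ (measurable_pi_apply _) (measurable_pi_apply _),
        pi_map_eval, pi_map_eval]
    have hsm : AEStronglyMeasurable (fun p : Z × V => g p * g p) (μ.map m) := by
      rw [hmap]; exact (hgm.mul hgm).aestronglyMeasurable
    calc ∫ ω, gc s ω * gc s ω ∂μ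
        = ∫ p, g p * g p ∂(μ.map m) := (integral_map hm.aemeasurable hsm).symm
      _ = ∫ p, g p * g p ∂(D.prod G) := by rw [hmap]
      _ = _ := hF4
  -- case 2 : same instance, different seeds
  have case2 : ∀ s t : Fin N, s ≠ t → a s = a t →
      ∫ ω, gc s ω * gc t ω ∂μ = sigma2AI D G f := by
    intro s t hst hat
    set F : Z × (V × V) → ℝ := fun q => g (q.1, q.2.1) * g (q.1, q.2.2) with hFdef
    have hFm : Measurable F :=
      (hgm.comp (measurable_fst.prodMk (measurable_fst.comp measurable_snd))).mul
        (hgm.comp (measurable_fst.prodMk (measurable_snd.comp measurable_snd)))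
    set m : ((Fin K → Z) × (Fin N → V)) → Z × (V × V) :=
      fun ω => (ω.1 (a s), (ω.2 s, ω.2 t)) with hmdef
    have hm : Measurable m :=
      (((measurable_pi_apply _).comp measurable_fst).prodMk
        (((measurable_pi_apply _).comp measurable_snd).prodMk
          ((measurable_pi_apply _).comp measurable_snd)))
    have hmap : μ.map m = D.prod (G.prod G) := by
      have : m = Prod.map (Function.eval (a s)) (fun y : Fin N → V => (y s, y t)) := rfl
      rw [this, hμdef, sampleMeasure,
        ← Measure.map_prod_map _ _ (measurable_pi_apply _)
          ((measurable_pi_apply _).prodMk (measurable_pi_apply _)),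
        pi_map_eval, pi_map_pair _ hst]
    have hsm : AEStronglyMeasurable F (μ.map m) := by
      rw [hmap]; exact hFm.aestronglyMeasurable
    have hFb : ∀ q, ‖F q‖ ≤ (2*M)*(2*M) := fun q => by
      rw [hFdef, norm_mul]
      exact mul_le_mul (hgb _) (hgb _) (norm_nonneg _) (by positivity)
    have hFint : Integrable F (D.prod (G.prod G)) := integrable_of_bdd hFm hFb
    have e : (fun ω => gc s ω * gc t ω) = fun ω => F (m ω) := by
      funext ω
      simp only [hgc, hFdef, hmdef, hat]
    calc ∫ ω, gc s ω * gc t ω ∂μ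
        = ∫ ω, F (m ω) ∂μ := by rw [e]
      _ = ∫ q, F q ∂(μ.map m) := (integral_map hm.aemeasurable hsm).symm
      _ = ∫ q, F q ∂(D.prod (G.prod G)) := by rw [hmap]
      _ = ∫ z, ∫ vw : V × V, g (z, vw.1) * g (z, vw.2) ∂(G.prod G) ∂D :=
          integral_prod F hFint
      _ = ∫ z, h z * h z ∂D := by
          refine integral_congr_ae (ae_of_all _ fun z => ?_)
          show (∫ vw : V × V, g (z, vw.1) * g (z, vw.2) ∂(G.prod G)) = h z * h z
          rw [integral_prod_mul (f := fun v => g (z, v)) (g := fun w => g (z, w)), hF1]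
      _ = _ := hF5
  -- case 3 : different instances
  have case3 : ∀ s t : Fin N, a s ≠ a t →
      ∫ ω, gc s ω * gc t ω ∂μ = 0 := by
    intro s t hat
    have hst : s ≠ t := fun hs => hat (by rw [hs])
    set F : (Z × Z) × (V × V) → ℝ := fun q => g (q.1.1, q.2.1) * g (q.1.2, q.2.2) with hFdef
    have hFm : Measurable F :=
      (hgm.comp ((measurable_fst.comp measurable_fst).prodMk
        (measurable_fst.comp measurable_snd))).mul
        (hgm.comp ((measurable_snd.comp measurable_fst).prodMk
          (measurable_snd.comp measurable_snd)))
    set m : ((Fin K → Z) × (Fin N → V)) → (Z × Z) × (V × V) :=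
      fun ω => ((ω.1 (a s), ω.1 (a t)), (ω.2 s, ω.2 t)) with hmdef
    have hm : Measurable m :=
      ((((measurable_pi_apply _).comp measurable_fst).prodMk
        ((measurable_pi_apply _).comp measurable_fst)).prodMk
        (((measurable_pi_apply _).comp measurable_snd).prodMk
          ((measurable_pi_apply _).comp measurable_snd)))
    have hmap : μ.map m = (D.prod D).prod (G.prod G) := by
      have : m = Prod.map (fun x : Fin K → Z => (x (a s), x (a t)))
          (fun y : Fin N → V => (y s, y t)) := rfl
      rw [this, hμdef, sampleMeasure,
        ← Measure.map_prod_map _ _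
          ((measurable_pi_apply _).prodMk (measurable_pi_apply _))
          ((measurable_pi_apply _).prodMk (measurable_pi_apply _)),
        pi_map_pair _ hat, pi_map_pair _ hst]
    have hsm : AEStronglyMeasurable F (μ.map m) := by
      rw [hmap]; exact hFm.aestronglyMeasurable
    have hFb : ∀ q, ‖F q‖ ≤ (2*M)*(2*M) := fun q => by
      rw [hFdef, norm_mul]
      exact mul_le_mul (hgb _) (hgb _) (norm_nonneg _) (by positivity)
    have hFint : Integrable F ((D.prod D).prod (G.prod G)) := integrable_of_bdd hFm hFb
    calc ∫ ω, gc s ω * gc t ω ∂μ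
        = ∫ ω, F (m ω) ∂μ := rfl
      _ = ∫ q, F q ∂(μ.map m) := (integral_map hm.aemeasurable hsm).symm
      _ = ∫ q, F q ∂((D.prod D).prod (G.prod G)) := by rw [hmap]
      _ = ∫ zz : Z × Z, ∫ vv : V × V, g (zz.1, vv.1) * g (zz.2, vv.2) ∂(G.prod G) ∂(D.prod D) :=
          integral_prod F hFint
      _ = ∫ zz : Z × Z, h zz.1 * h zz.2 ∂(D.prod D) := by
          refine integral_congr_ae (ae_of_all _ fun zz => ?_)
          show (∫ vv : V × V, g (zz.1, vv.1) * g (zz.2, vv.2) ∂(G.prod G)) = h zz.1 * h zz.2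
          rw [integral_prod_mul (f := fun v => g (zz.1, v)) (g := fun w => g (zz.2, w)),
            hF1, hF1]
      _ = (∫ z, h z ∂D) * ∫ z, h z ∂D := integral_prod_mul h h
      _ = 0 := by rw [hF3]; ring
  -- the value of each cross term
  have hc : ∀ s t : Fin N, ∫ ω, gc s ω * gc t ω ∂μ
      = (if s = t then sigma2WI D G f else 0) + (if a t = a s then sigma2AI D G f else 0) := by
    intro s t
    rcases eq_or_ne s t with rfl | hst
    · simp [case1 s]
    · rcases eq_or_ne (a s) (a t) with hat | hat
      · rw [case2 s t hst hat]
        simp [hst, hat.symm]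
      · rw [case3 s t hat]
        simp [hst, Ne.symm hat]
  -- rewrite the integrand
  have hrw : ∀ ω : (Fin K → Z) × (Fin N → V),
      ((1 / (N : ℝ)) * ∑ t : Fin N, f (ω.1 (a t), ω.2 t) - u) ^ 2
      = (1 / (N : ℝ)^2) * ∑ s : Fin N, ∑ t : Fin N, gc s ω * gc t ω := by
    intro ω
    have e1 : ∑ t : Fin N, gc t ω = (∑ t : Fin N, f (ω.1 (a t), ω.2 t)) - N * u := by
      rw [hgc]
      simp only [hg]
      rw [Finset.sum_sub_distrib]
      simp [mul_comm]
    have e2 : ((1 / (N : ℝ)) * ∑ t : Fin N, f (ω.1 (a t), ω.2 t) - u)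
        = (1 / (N : ℝ)) * ∑ t : Fin N, gc t ω := by
      rw [e1]
      field_simp
    rw [e2, mul_pow, sq (∑ t : Fin N, gc t ω), Finset.sum_mul_sum]
    ring
  -- integrate
  have hint1 : ∀ s t : Fin N, Integrable (fun ω => gc s ω * gc t ω) μ := fun s t =>
    integrable_of_bdd ((hgcm s).mul (hgcm t)) (C := (2*M)*(2*M)) fun ω => by
      rw [norm_mul]
      exact mul_le_mul (hgcb s ω) (hgcb t ω) (norm_nonneg _) (by positivity)
  calc ∫ ω, ((1 / (N : ℝ)) * ∑ t : Fin N, f (ω.1 (a t), ω.2 t) - u) ^ 2 ∂μ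
      = ∫ ω, (1 / (N : ℝ)^2) * ∑ s : Fin N, ∑ t : Fin N, gc s ω * gc t ω ∂μ :=
        integral_congr_ae (ae_of_all _ hrw)
    _ = (1 / (N : ℝ)^2) * ∫ ω, ∑ s : Fin N, ∑ t : Fin N, gc s ω * gc t ω ∂μ :=
        integral_const_mul _ _
    _ = (1 / (N : ℝ)^2) * ∑ s : Fin N, ∑ t : Fin N, ∫ ω, gc s ω * gc t ω ∂μ := by
        rw [integral_finset_sum _ fun s _ => integrable_finset_sum _ fun t _ => hint1 s t]
        congr 1
        exact Finset.sum_congr rfl fun s _ => integral_finset_sum _ fun t _ => hint1 s t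
    _ = (1 / (N : ℝ)^2) * ∑ s : Fin N, ∑ t : Fin N,
          ((if s = t then sigma2WI D G f else 0) + (if a t = a s then sigma2AI D G f else 0)) := by
        congr 1
        exact Finset.sum_congr rfl fun s _ => Finset.sum_congr rfl fun t _ => hc s t
    _ = (1 / (N : ℝ)^2) * ((N : ℝ) * sigma2WI D G f
          + (∑ i : Fin K, (nCount a i : ℝ) ^ 2) * sigma2AI D G f) := by
        congr 1
        rw [Finset.sum_congr rfl (fun (s : Fin N) _ => Finset.sum_add_distrib
          (s := Finset.univ) (f := fun t => if s = t then sigma2WI D G f else 0)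
          (g := fun t => if a t = a s then sigma2AI D G f else 0)), Finset.sum_add_distrib]
        congr 1
        · have e5 : ∀ s : Fin N, ∑ t : Fin N, (if s = t then sigma2WI D G f else 0)
              = sigma2WI D G f := fun s => by simp
          rw [Finset.sum_congr rfl fun s _ => e5 s, Finset.sum_const]
          simp [mul_comm]
        · have e3 : ∀ s : Fin N, ∑ t : Fin N, (if a t = a s then sigma2AI D G f else 0)
              = (nCount a (a s) : ℝ) * sigma2AI D G f := by
            intro s
            rw [← Finset.sum_filter, Finset.sum_const, nCount, nsmul_eq_mul]
          rw [Finset.sum_congr rfl fun s _ => e3 s, ← Finset.sum_mul]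
          congr 1
          rw [← Finset.sum_fiberwise' Finset.univ a (fun i => (nCount a i : ℝ))]
          refine Finset.sum_congr rfl fun i _ => ?_
          rw [Finset.sum_const, nsmul_eq_mul, sq]
          rfl
    _ = (1 / (N : ℝ)) * sigma2WI D G f
          + ((∑ i : Fin K, (nCount a i : ℝ) ^ 2) / (N : ℝ) ^ 2) * sigma2AI D G f := by
        field_simp
end

section
/- Among all choices of nonnegative integer run counts n_1,…,n_K with Σ_{i=1}^K n_i = N, the variance E[(û_{S_N} − u)²] of the (always unbiased) performance estimator is minimized by any choice satisfying n_i ∈ {⌊N/K⌋, ⌈N/K⌉} for all i ∈ {1,…,K}; that is, for any such balanced choice (n_i) and any other choice (m_i) of nonnegative integers with Σ_{i=1}^K m_i = N, the variance of the estimator using (n_i) is at most the variance of the estimator using (m_i). -/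
/-!
Write `g = f - u` and let run `t` use instance `c t` and seed `v_t`. Expanding the square, the
second moment of `∑ₜ g (z_{c t}, v_t)` is a sum of pair terms. The diagonal terms give `E[g²]`;
two distinct runs on the same instance share only the instance, giving `σ²_AI = E_z[(E_v g)²]`;
runs on different instances are independent and `g` is centred, so they contribute nothing.
Hence the variance is `(N E[g²] + σ²_AI (∑ᵢ nᵢ² - N)) / N²`, and among allocations with
`∑ᵢ nᵢ = N` the sum of squares `∑ᵢ nᵢ²` is smallest for balanced ones.
-/

open MeasureTheory

open Finset

section PiCoordinates

variable {ι : Type*} [Fintype ι] {X : ι → Type*} {mX : ∀ i, MeasurableSpace (X i)}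
  {μ : (i : ι) → Measure (X i)} [∀ i, IsProbabilityMeasure (μ i)]

theorem integral_pi_comp_eval_mul_comp_eval {i j : ι} (hij : i ≠ j) (φ : X i → ℝ) (ψ : X j → ℝ) :
    ∫ x, φ (x i) * ψ (x j) ∂Measure.pi μ = (∫ y, φ y ∂μ i) * ∫ y, ψ y ∂μ j := by
  classical
  set F := Function.update (Function.update (fun r => (1 : X r → ℝ)) i φ) j ψ
  have hF : ∀ r, r ≠ i ∧ r ≠ j → F r = 1 := fun r hr => by
    simp only [F, Function.update_of_ne hr.2, Function.update_of_ne hr.1]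
  have h : (fun x : (r : ι) → X r => φ (x i) * ψ (x j)) = fun x => ∏ r, F r (x r) := by
    ext x
    rw [Fintype.prod_eq_mul i j hij fun r hr => by simp [hF r hr]]
    simp [F, hij]
  rw [h, integral_fintype_prod_eq_prod, Fintype.prod_eq_mul i j hij fun r hr => by simp [hF r hr]]
  simp [F, hij]

end PiCoordinates

theorem sum_nCount {K N : ℕ} (c : Fin N → Fin K) : ∑ i, nCount c i = N := by
  simpa [nCount] using
    (card_eq_sum_card_fiberwise (s := univ) (t := univ) fun t _ => mem_univ (c t)).symm

theorem sum_nCount_apply_eq_sum_sq {K N : ℕ} (c : Fin N → Fin K) :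
    ∑ s, nCount c (c s) = ∑ i, nCount c i ^ 2 := by
  rw [← sum_fiberwise univ c fun s => nCount c (c s)]
  refine sum_congr rfl fun i _ => ?_
  rw [sum_congr rfl fun s hs => by rw [(mem_filter.1 hs).2], sum_const, smul_eq_mul, sq]
  rfl

theorem sum_sum_ite_diag_same_instance {K N : ℕ} (c : Fin N → Fin K) (Q A : ℝ) :
    ∑ s, ∑ t, (if s = t then Q else if c s = c t then A else 0) =
      N * Q + A * (∑ i, (nCount c i : ℝ) ^ 2 - N) := by
  have split : ∀ s t, (if s = t then Q else if c s = c t then A else 0) =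
      (if s = t then Q - A else 0) + if c t = c s then A else 0 := fun s t => by
    by_cases hst : s = t
    · simp [hst]
    · simp [hst, eq_comm]
  have hcount : ∀ s, ∑ t, (if c t = c s then A else 0) = A * nCount c (c s) := fun s => by
    rw [sum_ite, sum_const_zero, add_zero, sum_const, nsmul_eq_mul, mul_comm]
    rfl
  simp_rw [split, sum_add_distrib, sum_ite_eq, mem_univ, if_true, hcount, ← mul_sum]
  rw [sum_const, card_univ, Fintype.card_fin, nsmul_eq_mul, ← Nat.cast_sum,
    sum_nCount_apply_eq_sum_sq]
  push_cast
  ring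

theorem sum_sq_le_sum_sq_of_forall_eq_or_eq_add_one {ι : Type*} {s : Finset ι} {n m : ι → ℕ}
    {q : ℕ} (hn : ∀ i ∈ s, n i = q ∨ n i = q + 1) (hsum : ∑ i ∈ s, n i = ∑ i ∈ s, m i) :
    ∑ i ∈ s, n i ^ 2 ≤ ∑ i ∈ s, m i ^ 2 := by
  -- `x ↦ x ^ 2` lies above its chord through `q` and `q + 1`, and meets it exactly there.
  have chord_le : ∀ x : ℕ, (2 * q + 1) * x ≤ x ^ 2 + q * (q + 1) := fun x => by
    rcases le_or_gt x q with h | h <;> nlinarith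
  have chord_eq : ∀ i ∈ s, (2 * q + 1) * n i = n i ^ 2 + q * (q + 1) := fun i hi => by
    rcases hn i hi with h | h <;> rw [h] <;> ring
  have key : ∑ i ∈ s, (n i ^ 2 + q * (q + 1)) ≤ ∑ i ∈ s, (m i ^ 2 + q * (q + 1)) :=
    calc ∑ i ∈ s, (n i ^ 2 + q * (q + 1)) = (2 * q + 1) * ∑ i ∈ s, m i := by
          rw [← hsum, mul_sum]; exact sum_congr rfl fun i hi => (chord_eq i hi).symm
      _ ≤ ∑ i ∈ s, (m i ^ 2 + q * (q + 1)) := by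
          rw [mul_sum]; exact sum_le_sum fun i _ => chord_le _
  simpa only [sum_add_distrib, add_le_add_iff_right] using key

theorem Nat.ceilDiv_le_div_add_one (a b : ℕ) : a ⌈/⌉ b ≤ a / b + 1 := by
  rcases b.eq_zero_or_pos with rfl | hb
  · simp
  · rw [Nat.ceilDiv_eq_add_pred_div, ← Nat.add_div_right a hb]
    exact Nat.div_le_div_right (by omega)

section Sampling

variable {Z V : Type*} [MeasurableSpace Z] [MeasurableSpace V] {D : Measure Z} {G : Measure V}
  [IsProbabilityMeasure D] [IsProbabilityMeasure G] {K N : ℕ} {g : Z × V → ℝ} {C : ℝ}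

instance : IsProbabilityMeasure (sampleMeasure D G K N) := by
  unfold sampleMeasure; infer_instance

theorem integrable_sampleMeasure_mul (hg : Measurable g) (hC : ∀ p, ‖g p‖ ≤ C)
    (c : Fin N → Fin K) (s t : Fin N) :
    Integrable (fun ω => g (ω.1 (c s), ω.2 s) * g (ω.1 (c t), ω.2 t)) (sampleMeasure D G K N) :=
  Integrable.of_bound (by fun_prop) (C * C) <| ae_of_all _ fun ω => by
    rw [norm_mul]
    exact mul_le_mul (hC _) (hC _) (norm_nonneg _) ((norm_nonneg _).trans (hC (ω.1 (c s), ω.2 s)))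

theorem integral_sampleMeasure_mul (hg : Measurable g) (hC : ∀ p, ‖g p‖ ≤ C)
    (c : Fin N → Fin K) (s t : Fin N) :
    ∫ ω, g (ω.1 (c s), ω.2 s) * g (ω.1 (c t), ω.2 t) ∂sampleMeasure D G K N =
      if s = t then ∫ p, g p ^ 2 ∂D.prod G
      else if c s = c t then ∫ z, (∫ v, g (z, v) ∂G) ^ 2 ∂D
      else (∫ p, g p ∂D.prod G) ^ 2 := by
  have hg1 : Integrable g (D.prod G) :=
    Integrable.of_bound hg.aestronglyMeasurable C (ae_of_all _ hC)
  have hg2 : Integrable (fun p => g p ^ 2) (D.prod G) :=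
    Integrable.of_bound (by fun_prop) (C ^ 2) <| ae_of_all _ fun p => by
      rw [norm_pow]; gcongr; exact hC p
  rw [sampleMeasure, integral_prod _ (integrable_sampleMeasure_mul hg hC c s t)]
  by_cases hst : s = t
  · subst hst
    have hseed : ∀ x : Fin K → Z,
        ∫ y : Fin N → V, g (x (c s), y s) * g (x (c s), y s) ∂Measure.pi (fun _ => G) =
          ∫ v, g (x (c s), v) ^ 2 ∂G := fun x => by
      simp_rw [← sq]
      exact integral_comp_eval (X := fun _ => V) (f := fun v => g (x (c s), v) ^ 2)
        ((hg.comp measurable_prodMk_left).pow_const 2).aestronglyMeasurable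
    simp_rw [hseed, if_true]
    rw [integral_comp_eval (X := fun _ => Z) (f := fun z => ∫ v, g (z, v) ^ 2 ∂G),
      integral_prod _ hg2]
    exact (hg.pow_const 2).stronglyMeasurable.integral_prod_right'.aestronglyMeasurable
  have hseed : ∀ x : Fin K → Z,
      ∫ y : Fin N → V, g (x (c s), y s) * g (x (c t), y t) ∂Measure.pi (fun _ => G) =
        (∫ v, g (x (c s), v) ∂G) * ∫ v, g (x (c t), v) ∂G := fun x =>
    integral_pi_comp_eval_mul_comp_eval (X := fun _ => V) hst
      (fun v => g (x (c s), v)) (fun v => g (x (c t), v))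
  simp_rw [hseed, if_neg hst]
  split_ifs with hc
  · simp_rw [hc, ← sq]
    exact integral_comp_eval (X := fun _ => Z) (f := fun z => (∫ v, g (z, v) ∂G) ^ 2)
      (hg.stronglyMeasurable.integral_prod_right'.measurable.pow_const 2).aestronglyMeasurable
  · rw [integral_pi_comp_eval_mul_comp_eval (X := fun _ => Z) hc (fun z => ∫ v, g (z, v) ∂G)
      (fun z => ∫ v, g (z, v) ∂G), ← integral_prod _ hg1, sq]

theorem integral_sum_sq_sampleMeasure (hg : Measurable g) (hC : ∀ p, ‖g p‖ ≤ C)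
    (hmean : ∫ p, g p ∂D.prod G = 0) (c : Fin N → Fin K) :
    ∫ ω, (∑ t, g (ω.1 (c t), ω.2 t)) ^ 2 ∂sampleMeasure D G K N =
      N * ∫ p, g p ^ 2 ∂D.prod G +
        (∫ z, (∫ v, g (z, v) ∂G) ^ 2 ∂D) * (∑ i, (nCount c i : ℝ) ^ 2 - N) := by
  have hint := integrable_sampleMeasure_mul (D := D) (G := G) hg hC c
  simp_rw [sq (∑ t, _), sum_mul_sum]
  rw [integral_finsetSum _ fun s _ => integrable_finsetSum _ fun t _ => hint s t]
  simp_rw [integral_finsetSum _ fun t _ => hint _ t, integral_sampleMeasure_mul hg hC, hmean,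
    zero_pow two_ne_zero]
  exact sum_sum_ite_diag_same_instance c _ _

theorem integral_estimator_sub_truePerf_sq {f : Z × V → ℝ} (hf : Measurable f)
    (hC : ∀ p, ‖f p‖ ≤ C) (hN : N ≠ 0) (c : Fin N → Fin K) :
    ∫ ω, ((1 / (N : ℝ)) * ∑ t, f (ω.1 (c t), ω.2 t) - truePerf D G f) ^ 2
        ∂sampleMeasure D G K N =
      (N * ∫ p, (f p - truePerf D G f) ^ 2 ∂D.prod G +
        (∫ z, (∫ v, (f (z, v) - truePerf D G f) ∂G) ^ 2 ∂D) *
          (∑ i, (nCount c i : ℝ) ^ 2 - N)) / N ^ 2 := by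
  set u := truePerf D G f
  have hcenter : ∀ ω : (Fin K → Z) × (Fin N → V),
      (1 / (N : ℝ)) * ∑ t, f (ω.1 (c t), ω.2 t) - u = (∑ t, (f (ω.1 (c t), ω.2 t) - u)) / N :=
    fun ω => by
      rw [sum_sub_distrib, sum_const, card_univ, Fintype.card_fin, nsmul_eq_mul]
      field_simp
  have hmean : ∫ p, (f p - u) ∂D.prod G = 0 := by
    rw [integral_sub (Integrable.of_bound hf.aestronglyMeasurable C (ae_of_all _ hC))
      (integrable_const u), integral_const, probReal_univ, one_smul]
    exact sub_self u
  simp_rw [hcenter, div_pow, integral_div]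
  rw [integral_sum_sq_sampleMeasure (g := fun p => f p - u) (hf.sub measurable_const)
    (fun p => (norm_sub_le _ _).trans (add_le_add (hC p) le_rfl)) hmean]

end Sampling

theorem balanced_estimator_min_variance_general
    {Z V : Type*} [MeasurableSpace Z] [MeasurableSpace V]
    (D : Measure Z) (G : Measure V)
    [IsProbabilityMeasure D] [IsProbabilityMeasure G]
    (L U : ℝ)
    (f : Z × V → ℝ) (hf : Measurable f)
    (hbdd : ∀ z v, f (z, v) ∈ Set.Icc L U)
    (K N : ℕ) (hN : 1 ≤ N)
    (a : Fin N → Fin K)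
    (ha_bal : ∀ i, nCount a i = N / K ∨ nCount a i = N ⌈/⌉ K)
    (b : Fin N → Fin K) :
    ∫ ω : (Fin K → Z) × (Fin N → V),
        ((1 / (N : ℝ)) * ∑ t : Fin N, f (ω.1 (a t), ω.2 t) - truePerf D G f) ^ 2
      ∂(sampleMeasure D G K N)
    ≤ ∫ ω : (Fin K → Z) × (Fin N → V),
        ((1 / (N : ℝ)) * ∑ t : Fin N, f (ω.1 (b t), ω.2 t) - truePerf D G f) ^ 2
      ∂(sampleMeasure D G K N) := by
  have hC : ∀ p, ‖f p‖ ≤ max |L| |U| := fun p =>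
    abs_le_max_abs_abs (hbdd p.1 p.2).1 (hbdd p.1 p.2).2
  have ha : ∀ i ∈ univ, nCount a i = N / K ∨ nCount a i = N / K + 1 := fun i _ => by
    have := ha_bal i
    have := Nat.ceilDiv_le_div_add_one N K
    have := floorDiv_le_ceilDiv (a := K) (b := N)
    rw [Nat.floorDiv_eq_div] at this
    omega
  have hsq : ∑ i, nCount a i ^ 2 ≤ ∑ i, nCount b i ^ 2 :=
    sum_sq_le_sum_sq_of_forall_eq_or_eq_add_one ha (by rw [sum_nCount, sum_nCount])
  rw [integral_estimator_sub_truePerf_sq hf hC (by omega) a,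
    integral_estimator_sub_truePerf_sq hf hC (by omega) b]
  gcongr (_ + _ * (?_ - _)) / _
  exact_mod_cast hsq

/-- **The evenly-distributed experimental setting minimizes the variance.**
Among all choices of nonnegative integer run counts `n_1, …, n_K` with
`Σ n_i = N` (encoded via assignments of the `N` runs to the `K` instances),
the variance `E[(û_{S_N} − u)²]` of the (always unbiased) performance estimator
is minimized by any choice satisfying `n_i ∈ {⌊N/K⌋, ⌈N/K⌉}` for all `i`. -/
theorem balanced_estimator_min_variance
    {Z V : Type*} [MeasurableSpace Z] [MeasurableSpace V]
    (D : Measure Z) (G : Measure V)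
    [IsProbabilityMeasure D] [IsProbabilityMeasure G]
    (L U : ℝ) (hLU : L ≤ U)
    (f : Z × V → ℝ) (hf : Measurable f)
    (hbdd : ∀ z v, f (z, v) ∈ Set.Icc L U)
    (K N : ℕ) (hK : 1 ≤ K) (hN : 1 ≤ N)
    (a : Fin N → Fin K)
    (ha_bal : ∀ i, nCount a i = N / K ∨ nCount a i = N ⌈/⌉ K)
    (b : Fin N → Fin K) :
    ∫ ω : (Fin K → Z) × (Fin N → V),
        ((1 / (N : ℝ)) * ∑ t : Fin N, f (ω.1 (a t), ω.2 t) - truePerf D G f) ^ 2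
      ∂(sampleMeasure D G K N)
    ≤ ∫ ω : (Fin K → Z) × (Fin N → V),
        ((1 / (N : ℝ)) * ∑ t : Fin N, f (ω.1 (b t), ω.2 t) - truePerf D G f) ^ 2
      ∂(sampleMeasure D G K N) :=
  balanced_estimator_min_variance_general D G L U f hf hbdd K N hN a ha_bal b
end

section
/- For any positive real constants k, l, b, c, the real number ε₀ = ( (c + b·max(ln l − ln c, 0)/k) / l )^{1/k} satisfies the inequality ε₀^k · l + b·ln ε₀ ≥ c. -/
/-- **Explicit solution of the inequality `ε^k·l + b·ln ε ≥ c`.**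
For any positive reals `k, l, b, c`, the number
`ε₀ = ((c + b·max(ln l − ln c, 0)/k) / l)^(1/k)` satisfies
`ε₀^k·l + b·ln ε₀ ≥ c`. -/
theorem inequality_solution (k l b c : ℝ)
    (hk : 0 < k) (hl : 0 < l) (hb : 0 < b) (hc : 0 < c) :
    c ≤ (((c + b * max (Real.log l - Real.log c) 0 / k) / l) ^ (1 / k)) ^ k * l
      + b * Real.log (((c + b * max (Real.log l - Real.log c) 0 / k) / l) ^ (1 / k)) := by
  set M := max (Real.log l - Real.log c) 0 with hM
  have hM0 : 0 ≤ M := le_max_right _ _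
  have hnum : 0 < c + b * M / k := by positivity
  have hx : 0 < (c + b * M / k) / l := div_pos hnum hl
  have hpow : (((c + b * M / k) / l) ^ (1 / k)) ^ k = (c + b * M / k) / l := by
    rw [← Real.rpow_mul hx.le, one_div_mul_cancel hk.ne', Real.rpow_one]
  have hlog : Real.log (((c + b * M / k) / l) ^ (1 / k))
      = (1 / k) * Real.log ((c + b * M / k) / l) := Real.log_rpow hx _
  rw [hpow, hlog, div_mul_cancel₀ _ hl.ne']
  have hlogx : Real.log ((c + b * M / k) / l)
      = Real.log (c + b * M / k) - Real.log l := Real.log_div hnum.ne' hl.ne'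
  have h1 : Real.log c ≤ Real.log (c + b * M / k) :=
    Real.log_le_log hc (by nlinarith [div_nonneg (mul_nonneg hb.le hM0) hk.le])
  have h2 : Real.log l - Real.log c ≤ M := le_max_left _ _
  have key : 0 ≤ M + Real.log ((c + b * M / k) / l) := by
    rw [hlogx]; linarith
  have hbk : 0 < b / k := div_pos hb hk
  have e1 : b * (1 / k * Real.log ((c + b * M / k) / l))
      = b / k * Real.log ((c + b * M / k) / l) := by ring
  have e2 : b * M / k = b / k * M := by ring
  have := mul_nonneg hbk.le key
  rw [mul_add] at this
  linarith
end
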